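/- In the two-group Gaussian model, the variance ratio R = (σ̂₁²/N₁ + σ̂₀²/N₀) / (σ₁²/N₁ + σ₀²/N₀) converges to 1 in probability uniformly in the variances: for every e > 0 and d > 0 there exists M such that for all N₁ ≥ M, N₀ ≥ M and all σ₁² > 0, σ₀² > 0, P(|R − 1| > e) < d. -/

import Mathlib

open MeasureTheory ProbabilityTheory Filter Finset Topology NNReal

noncomputable section

/-- Sample mean of a finite family of reals. -/
def smean (n : ℕ) (f : Fin n → ℝ) : ℝ := (n : ℝ)⁻¹ * ∑ i, f i

/-- Sample variance (with divisor `n`) of a finite family of reals. -/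
def svar (n : ℕ) (f : Fin n → ℝ) : ℝ := (n : ℝ)⁻¹ * ∑ i, (f i - smean n f) ^ 2

/-- Variance ratio `R = (σ̂₁²/N₁ + σ̂₀²/N₀)/(σ₁²/N₁ + σ₀²/N₀)`. -/
def varRatio {N1 N0 : ℕ} {Ω : Type*} (v1 v0 : ℝ≥0)
    (ε : Fin N1 ⊕ Fin N0 → Ω → ℝ) (ω : Ω) : ℝ :=
  (svar N1 (fun i => ε (Sum.inl i) ω) / (N1 : ℝ) +
      svar N0 (fun i => ε (Sum.inr i) ω) / (N0 : ℝ)) /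
    ((v1 : ℝ) / (N1 : ℝ) + (v0 : ℝ) / (N0 : ℝ))


/-!
Since `svar = mean of squares − (mean)²`, Chebyshev's inequality for the two sample means bounds
`P(|svar − v| > t)` by `(4 Var[X²] / t² + 2 v / t) / N`. For `X ~ N(0, v)` one has
`Var[X²] = v² Var[Z²]` with `Z` standard, so the relative error `svar / v − 1` of each group
exceeds `e` with probability at most `C(e) / N`, whatever `v` is. Finally `R − 1` is a convex
combination of the two relative errors, so `|R − 1| > e` forces one of them to exceed `e`.
-/

open scoped ENNReal

lemma svar_eq_smean_sq_sub_sq (n : ℕ) (f : Fin n → ℝ) :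
    svar n f = smean n (fun i => f i ^ 2) - smean n f ^ 2 := by
  rcases Nat.eq_zero_or_pos n with rfl | hn
  · simp [svar, smean]
  have hn' : (n : ℝ) ≠ 0 := by positivity
  simp only [svar, smean, sub_sq, Finset.sum_add_distrib, Finset.sum_sub_distrib,
    ← Finset.sum_mul, ← Finset.mul_sum, Finset.sum_const, Finset.card_univ, Fintype.card_fin,
    nsmul_eq_mul]
  field_simp
  ring

lemma abs_div_add_div_sub_one_le {x y a b n m e : ℝ} (ha : 0 < a) (hb : 0 < b) (hn : 0 < n)
    (hm : 0 < m) (hx : |x / a - 1| ≤ e) (hy : |y / b - 1| ≤ e) :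
    |(x / n + y / m) / (a / n + b / m) - 1| ≤ e := by
  have habs : ∀ {x a : ℝ}, 0 < a → |x / a - 1| ≤ e → |x - a| ≤ e * a := fun {x a} ha h => by
    rwa [div_sub_one ha.ne', abs_div, abs_of_pos ha, div_le_iff₀ ha] at h
  have hw : 0 < a / n + b / m := by positivity
  rw [div_sub_one hw.ne', abs_div, abs_of_pos hw, div_le_iff₀ hw]
  calc |x / n + y / m - (a / n + b / m)| = |(x - a) / n + (y - b) / m| := by ring_nf
    _ ≤ |(x - a) / n| + |(y - b) / m| := abs_add_le _ _
    _ = |x - a| / n + |y - b| / m := by rw [abs_div, abs_div, abs_of_pos hn, abs_of_pos hm]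
    _ ≤ e * a / n + e * b / m := by gcongr <;> exact habs ‹_› ‹_›
    _ = e * (a / n + b / m) := by ring

section SampleMoments

variable {Ω : Type*} [MeasurableSpace Ω] {μ : Measure Ω} {N : ℕ} {X : Fin N → Ω → ℝ}

lemma MeasureTheory.MemLp.sq_of_four [IsFiniteMeasure μ] {Y : Ω → ℝ} (hY : MemLp Y 4 μ) :
    MemLp (fun ω => Y ω ^ 2) 2 μ := by
  refine (memLp_two_iff_integrable_sq (f := fun ω => Y ω ^ 2) (hY.1.pow 2)).mpr ?_
  refine (hY.integrable_norm_pow' (p := 4)).congr (ae_of_all _ fun ω => ?_)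
  simp only [Real.norm_eq_abs, ← pow_mul, pow_abs]
  exact abs_of_nonneg (by positivity)

lemma integral_smean [IsFiniteMeasure μ] (hN : 0 < N) (hX : ∀ i, Integrable (X i) μ) {m : ℝ}
    (hmean : ∀ i, μ[X i] = m) : μ[fun ω => smean N (fun i => X i ω)] = m := by
  have hN' : (N : ℝ) ≠ 0 := by positivity
  simp only [smean]
  rw [integral_const_mul, integral_finsetSum _ fun i _ => hX i]
  simp [hmean, hN']

lemma variance_smean (hX : ∀ i, MemLp (X i) 2 μ)
    (hindep : Pairwise fun i j => IndepFun (X i) (X j) μ) {s : ℝ} (hvar : ∀ i, Var[X i; μ] = s) :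
    Var[fun ω => smean N (fun i => X i ω); μ] = s / N := by
  have hsum : (fun ω => ∑ i, X i ω) = ∑ i, X i := by ext ω; simp
  simp only [smean]
  rw [variance_const_mul, hsum, IndepFun.variance_sum (fun i _ => hX i)
    (fun i _ j _ hij => hindep hij)]
  rcases Nat.eq_zero_or_pos N with rfl | hN
  · simp
  have hN' : (N : ℝ) ≠ 0 := by positivity
  simp [hvar]
  field_simp

lemma memLp_smean {p : ℝ≥0∞} (hX : ∀ i, MemLp (X i) p μ) :
    MemLp (fun ω => smean N (fun i => X i ω)) p μ :=
  (memLp_finsetSum _ fun i _ => hX i).const_mul _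

lemma measure_lt_abs_svar_sub_le [IsProbabilityMeasure μ] (hN : 0 < N)
    (hX : ∀ i, MemLp (X i) 4 μ) (hindep : Pairwise fun i j => IndepFun (X i) (X j) μ)
    {v w t : ℝ} (hmean : ∀ i, μ[X i] = 0) (hvar : ∀ i, Var[X i; μ] = v)
    (hvar_sq : ∀ i, Var[fun ω => X i ω ^ 2; μ] = w) (ht : 0 < t) :
    μ {ω | t < |svar N (fun i => X i ω) - v|}
      ≤ ENNReal.ofReal ((4 * w / t ^ 2 + 2 * v / t) / N) := by
  have hX₂ i : MemLp (X i) 2 μ := (hX i).mono_exponent (by norm_num)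
  have hXsq i : MemLp (fun ω => X i ω ^ 2) 2 μ := (hX i).sq_of_four
  have hsq_mean i : μ[fun ω => X i ω ^ 2] = v := by
    have := variance_eq_sub (hX₂ i)
    rw [hvar, hmean] at this
    simpa [Pi.pow_def] using this.symm
  set A : Ω → ℝ := fun ω => smean N (fun i => X i ω)
  set Q : Ω → ℝ := fun ω => smean N (fun i => X i ω ^ 2)
  have hA_mean : μ[A] = 0 :=
    integral_smean hN (fun i => (hX₂ i).integrable one_le_two) hmean
  have hQ_mean : μ[Q] = v :=
    integral_smean hN (fun i => (hXsq i).integrable one_le_two) hsq_mean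
  have hA_var : Var[A; μ] = v / N := variance_smean hX₂ hindep hvar
  have hQ_var : Var[Q; μ] = w / N := variance_smean hXsq
    (fun i j hij => (hindep hij).comp (measurable_id.pow_const 2) (measurable_id.pow_const 2))
    hvar_sq
  have hsub : {ω | t < |svar N (fun i => X i ω) - v|}
      ⊆ {ω | t / 2 ≤ |Q ω - μ[Q]|} ∪ {ω | √(t / 2) ≤ |A ω - μ[A]|} := by
    intro ω hω
    by_contra! h
    simp only [Set.mem_union, Set.mem_ofPred_eq, not_or, not_le, hQ_mean, hA_mean,
      sub_zero] at h hω
    have hA_sq : A ω ^ 2 < t / 2 := by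
      simpa [sq_abs] using (Real.lt_sqrt (abs_nonneg (A ω))).mp h.2
    have hsvar : svar N (fun i => X i ω) - v = (Q ω - v) - A ω ^ 2 := by
      rw [svar_eq_smean_sq_sub_sq]
      ring
    rw [hsvar] at hω
    linarith [abs_sub (Q ω - v) (A ω ^ 2), abs_of_nonneg (sq_nonneg (A ω))]
  calc μ {ω | t < |svar N (fun i => X i ω) - v|}
      ≤ μ {ω | t / 2 ≤ |Q ω - μ[Q]|} + μ {ω | √(t / 2) ≤ |A ω - μ[A]|} :=
        (measure_mono hsub).trans (measure_union_le _ _)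
    _ ≤ ENNReal.ofReal (Var[Q; μ] / (t / 2) ^ 2) + ENNReal.ofReal (Var[A; μ] / √(t / 2) ^ 2) :=
        add_le_add (meas_ge_le_variance_div_sq (memLp_smean hXsq) (by positivity))
          (meas_ge_le_variance_div_sq (memLp_smean hX₂) (by positivity))
    _ = ENNReal.ofReal ((4 * w / t ^ 2 + 2 * v / t) / N) := by
        rw [← ENNReal.ofReal_add (div_nonneg (variance_nonneg _ _) (sq_nonneg _))
          (div_nonneg (variance_nonneg _ _) (sq_nonneg _)), hQ_var, hA_var,
          Real.sq_sqrt (by positivity)]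
        congr 1
        field_simp
        ring

end SampleMoments

namespace ProbabilityTheory

variable {Ω : Type*} [MeasurableSpace Ω] {μ : Measure Ω} {X : Ω → ℝ} {m : ℝ} {v : ℝ≥0}

lemma variance_sq_gaussianReal (v : ℝ≥0) :
    Var[fun x => x ^ 2; gaussianReal 0 v] = v ^ 2 * Var[fun x => x ^ 2; gaussianReal 0 1] := by
  have hscale : (gaussianReal 0 1).map (√(v : ℝ) * ·) = gaussianReal 0 v := by
    rw [gaussianReal_map_const_mul, mul_zero, mul_one]
    congr 1
    ext
    simp
  rw [← hscale, variance_map (by fun_prop) (by fun_prop)]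
  simp only [Function.comp_def, mul_pow, Real.sq_sqrt v.coe_nonneg]
  exact variance_const_mul _ _ _

lemma HasLaw.memLp_gaussianReal (hX : HasLaw X (gaussianReal m v) μ) {p : ℝ≥0∞}
    (hp : p ≠ ∞) : MemLp X p μ := by
  have := memLp_id_gaussianReal' (μ := m) (v := v) p hp
  rw [← hX.map_eq, memLp_map_measure_iff aestronglyMeasurable_id hX.aemeasurable] at this
  exact this

lemma HasLaw.integral_gaussianReal (hX : HasLaw X (gaussianReal m v) μ) : μ[X] = m := by
  rw [hX.integral_eq, integral_id_gaussianReal]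

lemma HasLaw.variance_gaussianReal (hX : HasLaw X (gaussianReal m v) μ) : Var[X; μ] = v := by
  rw [hX.variance_eq, variance_id_gaussianReal]

lemma HasLaw.variance_sq_gaussianReal (hX : HasLaw X (gaussianReal 0 v) μ) :
    Var[fun ω => X ω ^ 2; μ] = v ^ 2 * Var[fun x => x ^ 2; gaussianReal 0 1] := by
  rw [← ProbabilityTheory.variance_sq_gaussianReal, ← hX.map_eq,
    variance_map (by fun_prop) hX.aemeasurable]
  rfl

end ProbabilityTheory

-- `Var[Z²] = 2` for a standard Gaussian `Z`, but the argument never needs this value.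
def svarDeviationBound (e : ℝ) : ℝ := 4 * Var[fun x => x ^ 2; gaussianReal 0 1] / e ^ 2 + 2 / e

lemma svarDeviationBound_nonneg {e : ℝ} (he : 0 < e) : 0 ≤ svarDeviationBound e :=
  add_nonneg (div_nonneg (mul_nonneg zero_le_four (variance_nonneg _ _)) (sq_nonneg e))
    (by positivity)

section Deviation

variable {Ω : Type*} [MeasurableSpace Ω] {μ : Measure Ω} [IsProbabilityMeasure μ]

lemma measure_lt_abs_svar_div_sub_one_le {N : ℕ} (hN : 0 < N) {X : Fin N → Ω → ℝ} {v : ℝ≥0}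
    (hv : 0 < v) (hX : ∀ i, HasLaw (X i) (gaussianReal 0 v) μ)
    (hindep : Pairwise fun i j => IndepFun (X i) (X j) μ) {e : ℝ} (he : 0 < e) :
    μ {ω | e < |svar N (fun i => X i ω) / v - 1|}
      ≤ ENNReal.ofReal (svarDeviationBound e / N) := by
  have hv' : (0 : ℝ) < v := hv
  have hevent : {ω | e < |svar N (fun i => X i ω) / v - 1|}
      = {ω | e * v < |svar N (fun i => X i ω) - v|} := by
    ext ω
    rw [Set.mem_ofPred_eq, Set.mem_ofPred_eq, div_sub_one hv'.ne', abs_div, abs_of_pos hv',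
      lt_div_iff₀ hv']
  have hbound := measure_lt_abs_svar_sub_le hN (fun i => (hX i).memLp_gaussianReal (by simp))
    hindep (fun i => (hX i).integral_gaussianReal) (fun i => (hX i).variance_gaussianReal)
    (fun i => (hX i).variance_sq_gaussianReal) (mul_pos he hv')
  rw [hevent]
  refine hbound.trans_eq (congrArg ENNReal.ofReal ?_)
  unfold svarDeviationBound
  field_simp

lemma measureReal_lt_abs_varRatio_sub_one_le {N1 N0 : ℕ} (hN1 : 0 < N1) (hN0 : 0 < N0)
    {v1 v0 : ℝ≥0} (hv1 : 0 < v1) (hv0 : 0 < v0) {ε : Fin N1 ⊕ Fin N0 → Ω → ℝ}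
    (hindep : iIndepFun ε μ) (hε1 : ∀ i, HasLaw (ε (.inl i)) (gaussianReal 0 v1) μ)
    (hε0 : ∀ i, HasLaw (ε (.inr i)) (gaussianReal 0 v0) μ) {e : ℝ} (he : 0 < e) :
    μ.real {ω | e < |varRatio v1 v0 ε ω - 1|}
      ≤ svarDeviationBound e / N1 + svarDeviationBound e / N0 := by
  have hsub : {ω | e < |varRatio v1 v0 ε ω - 1|}
      ⊆ {ω | e < |svar N1 (fun i => ε (.inl i) ω) / v1 - 1|}
        ∪ {ω | e < |svar N0 (fun i => ε (.inr i) ω) / v0 - 1|} := by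
    intro ω hω
    by_contra! h
    simp only [Set.mem_union, Set.mem_ofPred_eq, not_or, not_lt] at h hω
    exact hω.not_ge (abs_div_add_div_sub_one_le hv1 hv0 (by positivity) (by positivity) h.1 h.2)
  have hC := svarDeviationBound_nonneg he
  refine ENNReal.toReal_le_of_le_ofReal (by positivity) ?_
  calc μ {ω | e < |varRatio v1 v0 ε ω - 1|}
      ≤ μ {ω | e < |svar N1 (fun i => ε (.inl i) ω) / v1 - 1|}
        + μ {ω | e < |svar N0 (fun i => ε (.inr i) ω) / v0 - 1|} :=
        (measure_mono hsub).trans (measure_union_le _ _)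
    _ ≤ ENNReal.ofReal (svarDeviationBound e / N1) + ENNReal.ofReal (svarDeviationBound e / N0) :=
        add_le_add
          (measure_lt_abs_svar_div_sub_one_le hN1 hv1 hε1
            (fun i j hij => hindep.indepFun (Sum.inl_injective.ne hij)) he)
          (measure_lt_abs_svar_div_sub_one_le hN0 hv0 hε0
            (fun i j hij => hindep.indepFun (Sum.inr_injective.ne hij)) he)
    _ = ENNReal.ofReal (svarDeviationBound e / N1 + svarDeviationBound e / N0) :=
        (ENNReal.ofReal_add (by positivity) (by positivity)).symm

end Deviation

/-- In the two-group Gaussian model, the variance ratio `R` converges to `1` in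
probability uniformly in the variances: for every `e > 0` and `d > 0` there is
`M` such that whenever `N₁, N₀ ≥ M` and `σ₁², σ₀² > 0`, `P(|R − 1| > e) < d`. -/
theorem variance_ratio_uniformly_consistent (e d : ℝ) (he : 0 < e) (hd : 0 < d) :
    ∃ M : ℕ, ∀ (N1 N0 : ℕ), M ≤ N1 → M ≤ N0 →
      ∀ (v1 v0 : ℝ≥0), 0 < v1 → 0 < v0 →
      ∀ (Ω : Type) [MeasurableSpace Ω] (μ : Measure Ω) [IsProbabilityMeasure μ]
        (ε : Fin N1 ⊕ Fin N0 → Ω → ℝ),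
        (∀ i, Measurable (ε i)) →
        iIndepFun ε μ →
        (∀ i : Fin N1, μ.map (ε (Sum.inl i)) = gaussianReal 0 v1) →
        (∀ i : Fin N0, μ.map (ε (Sum.inr i)) = gaussianReal 0 v0) →
        (μ {ω | e < |varRatio v1 v0 ε ω - 1|}).toReal < d := by
  set C := svarDeviationBound e
  have hsmall : ∀ N : ℕ, ⌈2 * C / d⌉₊ + 1 ≤ N → C / N < d / 2 := by
    intro N hN
    have hN' : 2 * C / d < N := by
      calc 2 * C / d ≤ ⌈2 * C / d⌉₊ := Nat.le_ceil _
        _ < N := by exact_mod_cast hN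
    rw [div_lt_iff₀ hd] at hN'
    rw [div_lt_iff₀ (by exact_mod_cast (show 0 < N by omega))]
    linarith
  refine ⟨⌈2 * C / d⌉₊ + 1, ?_⟩
  intro N1 N0 hN1 hN0 v1 v0 hv1 hv0 Ω _ μ _ ε hmeas hindep hmap1 hmap0
  have hbound := measureReal_lt_abs_varRatio_sub_one_le (by omega) (by omega) hv1 hv0 hindep
    (fun i => ⟨(hmeas _).aemeasurable, hmap1 i⟩) (fun i => ⟨(hmeas _).aemeasurable, hmap0 i⟩) he
  calc (μ {ω | e < |varRatio v1 v0 ε ω - 1|}).toReal ≤ C / N1 + C / N0 := hbound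
    _ < d / 2 + d / 2 := add_lt_add (hsmall N1 hN1) (hsmall N0 hN0)
    _ = d := add_halves d

end
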